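/- arXiv:2301.05904 — 2 statements merged into one kernel-verified Lean document; each statement's English description precedes it below -/
import Mathlib

section
/- Let L be a finite graded poset of rank n, let Σ be a finite poset with a rank function such that adjoining a new minimum element 0̂ yields a finite graded poset Σ∪{0̂} of rank n+1, and let supp : Σ → L be an order-preserving, rank-preserving surjection whose extension to chains satisfies #supp^{−1}(C) = Poin_C(L;1) for every chain C in L. Then Ψ(Σ∪{0̂};a,b) = a·Ψ_pull(L;a,b), where Ψ_pull(L;a,b) = exΨ(L;1,a,b) is the pullback ab-index of L. -/
open Finset
open scoped Classical

noncomputable section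

/-- Words in the noncommuting letters `a`, `b`; `false` encodes `a`, `true` encodes `b`. -/
abbrev ABWord : Type := FreeMonoid Bool

/-- Polynomials in a central (commuting) variable `y` and noncommuting variables `a`, `b`,
realized as the monoid algebra of the free monoid on `{a,b}` over `ℤ[y]`. -/
abbrev ABPoly : Type := MonoidAlgebra (Polynomial ℤ) ABWord

/-- The letter `a`. -/
def lA : ABPoly := MonoidAlgebra.single (FreeMonoid.of false) 1

/-- The letter `b`. -/
def lB : ABPoly := MonoidAlgebra.single (FreeMonoid.of true) 1

/-- The central variable `y`. -/
def lY : ABPoly := MonoidAlgebra.single 1 Polynomial.X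

/-- The scalar `p ∈ ℤ[y]` inside `ABPoly`. -/
def scal (p : Polynomial ℤ) : ABPoly := MonoidAlgebra.single 1 p

/-- The ab-word attached to `v : Fin n → Bool`. -/
def wordOf {n : ℕ} (v : Fin n → Bool) : ABWord := FreeMonoid.ofList (List.ofFn v)

/-- The ab-monomial attached to `v : Fin n → Bool`. -/
def abMono {n : ℕ} (v : Fin n → Bool) : ABPoly := MonoidAlgebra.single (wordOf v) 1

/-- The substitution ω on an ab-word: every occurrence of the factor `ab` is replaced by
`ab + y·ba + y·ab + y²·ba`, and every remaining occurrence of `a` (resp. `b`) is replaced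
by `a + y·b` (resp. `b + y·a`). -/
def omegaWord : List Bool → ABPoly
  | [] => 1
  | false :: true :: l =>
      (lA * lB + lY * (lB * lA) + lY * (lA * lB) + lY * lY * (lB * lA)) * omegaWord l
  | false :: l => (lA + lY * lB) * omegaWord l
  | true :: l => (lB + lY * lA) * omegaWord l

/-- The substitution ω, extended linearly to ab-polynomials. -/
def omegaSub (f : ABPoly) : ABPoly :=
  f.coeff.sum fun w p => scal p * omegaWord (FreeMonoid.toList w)

/-- The map ι deleting the first letter of every ab-monomial. -/
def iotaSub (f : ABPoly) : ABPoly :=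
  f.coeff.sum fun w p => MonoidAlgebra.single (FreeMonoid.ofList (FreeMonoid.toList w).tail) p

/-- Evaluation of the central variable `y` at `c`. -/
def evalY (c : ℤ) (f : ABPoly) : ABPoly :=
  f.coeff.sum fun w p => MonoidAlgebra.single w (Polynomial.C (Polynomial.eval c p))

/-- For `E ⊆ {1,…,n}`, the set `I_E` of positions where a block outside `E` ends. -/
def IE (E : Finset ℕ) (n : ℕ) : Finset ℕ :=
  (Finset.Icc 1 n).filter fun i => i ∉ E ∧ i + 1 ∈ E

/-- For `E ⊆ {1,…,n}`, the set `J_E` of positions where a block inside `E` ends. -/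
def JE (E : Finset ℕ) (n : ℕ) : Finset ℕ :=
  (Finset.Icc 1 n).filter fun i => i ∈ E ∧ i + 1 ∉ E

section Poset

variable {P : Type} [Fintype P] [PartialOrder P] [BoundedOrder P]

/-- `P` is graded of rank `n` with rank function `rk`: the bottom has rank `0`, the top has
rank `n`, and ranks increase by one along cover relations (so every maximal chain from `⊥`
to `X` has length `rk X`). -/
def GradedRank (rk : P → ℕ) (n : ℕ) : Prop :=
  rk (⊥ : P) = 0 ∧ rk (⊤ : P) = n ∧ ∀ x y : P, x ⋖ y → rk y = rk x + 1

/-- `mu` is the Möbius function of `P`. -/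
def IsMoebius (mu : P → P → ℤ) : Prop :=
  (∀ x : P, mu x x = 1) ∧
    ∀ x y : P, x < y → mu x y = -∑ z ∈ univ.filter fun z => x ≤ z ∧ z < y, mu x z

/-- `l` is a saturated chain from `x` to `y` with weakly increasing labels. -/
def RisingSatChain (lam : P → P → ℕ) (x y : P) (l : List P) : Prop :=
  l.head? = some x ∧ l.getLast? = some y ∧ List.Chain' (· ⋖ ·) l ∧
    List.Chain' (· ≤ ·) (List.zipWith lam l l.tail)

/-- `lam` is an R-labeling of `P`: it takes positive values on cover relations, and every
interval has a unique maximal (saturated) chain with weakly increasing labels. -/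
def IsRLabeling (lam : P → P → ℕ) : Prop :=
  (∀ x y : P, x ⋖ y → 0 < lam x y) ∧
    ∀ x y : P, x ≤ y → ∃! l : List P, RisingSatChain lam x y l

/-- The Poincaré polynomial `Poin(P;y) = ∑_X |μ(⊥,X)| y^{rk X}`. -/
def poinPoly (mu : P → P → ℤ) (rk : P → ℕ) : Polynomial ℤ :=
  ∑ x : P, Polynomial.C |mu ⊥ x| * Polynomial.X ^ rk x

/-- The Poincaré polynomial of the interval `[x,y]`. -/
def intervalPoin (mu : P → P → ℤ) (rk : P → ℕ) (x y : P) : Polynomial ℤ :=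
  ∑ z ∈ univ.filter fun z => x ≤ z ∧ z ≤ y,
    Polynomial.C |mu x z| * Polynomial.X ^ (rk z - rk x)

/-- The successor of `x` in the chain `C` (and `⊤` if `x` is the largest element of `C`). -/
def chainNext (C : Finset P) (x : P) : P :=
  if h : ∃ y, y ∈ C ∧ x < y ∧ ∀ z ∈ C, x < z → y ≤ z then h.choose else ⊤

/-- The chain Poincaré polynomial `Poin_C(P;y) = ∏_i Poin([C_i, C_{i+1}]; y)`, with the
convention `C_{k+1} = ⊤`. -/
def chainPoin (mu : P → P → ℤ) (rk : P → ℕ) (C : Finset P) : Polynomial ℤ :=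
  ∏ x ∈ C, intervalPoin mu rk x (chainNext C x)

/-- The weight `w_lo ⋯ w_{hi-1}` of a chain `C`, where `w_i = b` if `i ∈ Rank(C)` and
`w_i = a - b` otherwise. -/
def wtWord (rk : P → ℕ) (C : Finset P) (lo hi : ℕ) : ABPoly :=
  ((List.range' lo (hi - lo)).map fun i => if i ∈ C.image rk then lB else lA - lB).prod

/-- The Poincaré-extended ab-index
`exΨ(P;y,a,b) = ∑_{C chain in P∖{⊤}} Poin_C(P;y) · wt_C(a,b)`. -/
def exPsi (mu : P → P → ℤ) (rk : P → ℕ) (n : ℕ) : ABPoly :=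
  ∑ C ∈ univ.filter fun C : Finset P => IsChain (· ≤ ·) (C : Set P) ∧ (⊤ : P) ∉ C,
    scal (chainPoin mu rk C) * wtWord rk C 0 n

/-- Maximal chains `M₀ ⋖ M₁ ⋖ ⋯ ⋖ M_n` of `P`, encoded as functions `Fin (n+1) → P`. -/
def maxChains (n : ℕ) : Finset (Fin (n + 1) → P) :=
  univ.filter fun M =>
    M 0 = (⊥ : P) ∧ M (Fin.last n) = (⊤ : P) ∧ ∀ i : Fin n, M i.castSucc ⋖ M i.succ

/-- Entry `j` of a maximal chain (with clamping). -/
def idx {n : ℕ} (M : Fin (n + 1) → P) (j : ℕ) : P :=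
  M ⟨min j n, Nat.lt_succ_of_le (min_le_right j n)⟩

/-- The ab-word `u(M) = u₁⋯u_n` of a maximal chain: `u₁ = a`, and for `i ≥ 2`, `u_i = a`
iff `λ(M_{i-2},M_{i-1}) ≤ λ(M_{i-1},M_i)`.  Position `i` is encoded by `j = i - 1 : Fin n`. -/
def uStat (lam : P → P → ℕ) {n : ℕ} (M : Fin (n + 1) → P) (j : Fin n) : Bool :=
  if j.1 = 0 then false
  else !decide (lam (idx M (j.1 - 1)) (idx M j.1) ≤ lam (idx M j.1) (idx M (j.1 + 1)))

/-- The ab-word `u(M,E) = v₁⋯v_n`, obtained from `u(M)` by turning `a` into `b` at every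
position in `E` and turning `b` into `a` at every position directly following a position
in `E`.  Position `i ∈ {1,…,n}` is encoded by `j = i - 1 : Fin n`. -/
def uStatE (lam : P → P → ℕ) {n : ℕ} (M : Fin (n + 1) → P) (E : Finset (Fin n))
    (j : Fin n) : Bool :=
  if uStat lam M j then
    if h : 0 < j.1 then
      (if (⟨j.1 - 1, Nat.lt_of_le_of_lt (Nat.sub_le j.1 1) j.2⟩ : Fin n) ∈ E then false
       else true)
    else true
  else if j ∈ E then true else false

/-- The label of the `j`-th cover relation of a maximal chain. -/
def labSeq (lam : P → P → ℕ) {n : ℕ} (M : Fin (n + 1) → P) (j : ℕ) : ℕ :=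
  lam (idx M j) (idx M (j + 1))

/-- The labels of `M` strictly decrease along positions `lo,…,hi`. -/
def StrictDecOn (lam : P → P → ℕ) {n : ℕ} (M : Fin (n + 1) → P) (lo hi : ℕ) : Prop :=
  ∀ j : ℕ, lo ≤ j → j + 2 ≤ hi → labSeq lam M (j + 1) < labSeq lam M j

/-- The labels of `M` weakly increase along positions `lo,…,hi`. -/
def WeakIncOn (lam : P → P → ℕ) {n : ℕ} (M : Fin (n + 1) → P) (lo hi : ℕ) : Prop :=
  ∀ j : ℕ, lo ≤ j → j + 2 ≤ hi → labSeq lam M j ≤ labSeq lam M (j + 1)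

/-- `(C,D)` is an interlacing pair: `C` is a chain, `D` a multichain, and
`C₁ ≤ D₁ ≤ C₂ ≤ D₂ ≤ ⋯ ≤ C_k ≤ D_k`. -/
def Interlacing {k : ℕ} (C D : Fin k → P) : Prop :=
  StrictMono C ∧ Monotone D ∧ (∀ i, C i ≤ D i) ∧
    ∀ (i : ℕ) (h : i + 1 < k), D ⟨i, Nat.lt_of_succ_lt h⟩ ≤ C ⟨i + 1, h⟩

/-- `IRank(C,D) = {r ∈ {1,…,n} : rk C_i < r ≤ rk D_i for some i}`. -/
def IRankSet (rk : P → ℕ) (n : ℕ) {k : ℕ} (C D : Fin k → P) : Finset ℕ :=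
  (Finset.Icc 1 n).filter fun r => ∃ i, rk (C i) < r ∧ r ≤ rk (D i)

/-- `irank(C,D) = #IRank(C,D)`. -/
def irank (rk : P → ℕ) (n : ℕ) {k : ℕ} (C D : Fin k → P) : ℕ := (IRankSet rk n C D).card

/-- `IncDec(C,D)`: the maximal chains of `P` refining `C₁ ≤ D₁ ≤ ⋯ ≤ C_k ≤ D_k` whose labels
strictly decrease along every interval `[C_i, D_i]` and weakly increase along `[⊥, C₁]`,
every `[D_i, C_{i+1}]`, and `[D_k, ⊤]`. -/
def IncDecSet (lam : P → P → ℕ) (rk : P → ℕ) (n : ℕ) {k : ℕ} (C D : Fin k → P) :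
    Finset (Fin (n + 1) → P) :=
  (maxChains n).filter fun M =>
    (∀ i, ∃ j, M j = C i) ∧ (∀ i, ∃ j, M j = D i) ∧
    (∀ i, StrictDecOn lam M (rk (C i)) (rk (D i))) ∧
    ∀ i : ℕ, ∀ hik : i ≤ k,
      WeakIncOn lam M
        (if h : 0 < i then rk (D ⟨i - 1, by omega⟩) else 0)
        (if h : i < k then rk (C ⟨i, h⟩) else n)

/-- The set `A_ℓ(S)` of triples `(C,D,M)` with `(C,D)` interlacing, `Rank(C) = S`,
`irank(C,D) = ℓ`, and `M ∈ IncDec(C,D)`. -/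
def ASet (lam : P → P → ℕ) (rk : P → ℕ) (n ℓ : ℕ) (S : Finset ℕ) :
    Finset ((Fin S.card → P) × (Fin S.card → P) × (Fin (n + 1) → P)) :=
  univ.filter fun t =>
    Interlacing t.1 t.2.1 ∧ (univ.image fun i => rk (t.1 i)) = S ∧
      irank rk n t.1 t.2.1 = ℓ ∧ t.2.2 ∈ IncDecSet lam rk n t.1 t.2.1

/-- The underlying set of a chain. -/
def toFS {k : ℕ} (C : Fin k → P) : Finset P := univ.image C

/-- The underlying multiset of a multichain. -/
def toMS {k : ℕ} (C : Fin k → P) : Multiset P := Multiset.map C univ.val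

/-- The set `B_ℓ(T) = A_ℓ(T) ∖ ⋃_{S ⊊ T} φ_{S,T}(A_ℓ(S))`, where
`φ_{S,T}(C,D,M) = (C ∪ {M_r : r ∈ T∖S}, D ∪ {M_r : r ∈ T∖S}, M)`. -/
def BSet (lam : P → P → ℕ) (rk : P → ℕ) (n ℓ : ℕ) (T : Finset ℕ) :
    Finset ((Fin T.card → P) × (Fin T.card → P) × (Fin (n + 1) → P)) :=
  (ASet lam rk n ℓ T).filter fun t =>
    ¬∃ S : Finset ℕ, S ⊂ T ∧ ∃ C₀ D₀ : Fin S.card → P,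
      (C₀, D₀, t.2.2) ∈ ASet lam rk n ℓ S ∧
      toMS t.1 = toMS C₀ + Multiset.map (fun r => idx t.2.2 r) (T \ S).val ∧
      toMS t.2.1 = toMS D₀ + Multiset.map (fun r => idx t.2.2 r) (T \ S).val

/-- The set `T(M,E)` of positions `i ∈ {0,…,n-1}` with `i,i+1 ∈ E` and `u_{i+1} = a`, or
`i,i+1 ∉ E` and `u_{i+1} = b`. -/
def TME (lam : P → P → ℕ) {n : ℕ} (M : Fin (n + 1) → P) (E : Finset ℕ) : Finset ℕ :=
  (Finset.range n).filter fun i =>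
    (i ∈ E ∧ i + 1 ∈ E ∧ ∀ h : i < n, uStat lam M ⟨i, h⟩ = false) ∨
    (i ∉ E ∧ i + 1 ∉ E ∧ ∀ h : i < n, uStat lam M ⟨i, h⟩ = true)

/-- `IL_{M,E}`: interlacing pairs `(C,D)` (recorded by the underlying set of `C` and the
underlying multiset of `D`) with `IRank(C,D) = E` and `M ∈ IncDec(C,D)`. -/
def ILME (lam : P → P → ℕ) (rk : P → ℕ) (n : ℕ) (M : Fin (n + 1) → P) (E : Finset ℕ) :
    Set (Finset P × Multiset P) :=
  {p | ∃ (k : ℕ) (C D : Fin k → P), Interlacing C D ∧ p.1 = toFS C ∧ p.2 = toMS D ∧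
    IRankSet rk n C D = E ∧ M ∈ IncDecSet lam rk n C D}

/-- The chain `C_R = {M_i : i ∈ I_E ∪ R}`. -/
def CR {n : ℕ} (M : Fin (n + 1) → P) (E R : Finset ℕ) : Finset P :=
  (IE E n ∪ R).image fun r => idx M r

/-- The multichain `D_R = {{M_i : i ∈ J_E ⊔ R}}` (multiset union). -/
def DR {n : ℕ} (M : Fin (n + 1) → P) (E R : Finset ℕ) : Multiset P :=
  Multiset.map (fun r => idx M r) ((JE E n).val + R.val)

/-- The numerator polynomial
`Num(P;y,t) = ∑_{C chain in P∖{⊥,⊤}} Poin_{{⊥}∪C}(P;y) t^{#C} (1-t)^{n-1-#C}`,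
an element of `ℤ[y][t]` (outer variable `t`, inner variable `y`). -/
def NumPoly (mu : P → P → ℤ) (rk : P → ℕ) (n : ℕ) : Polynomial (Polynomial ℤ) :=
  ∑ C ∈ univ.filter fun C : Finset P =>
      IsChain (· ≤ ·) (C : Set P) ∧ (⊥ : P) ∉ C ∧ (⊤ : P) ∉ C,
    Polynomial.C (chainPoin mu rk (insert ⊥ C)) * Polynomial.X ^ C.card *
      (1 - Polynomial.X) ^ (n - 1 - C.card)

/-- The chain Poincaré polynomial of a chain given as `C : Fin k → P`. -/
def funChainPoin (mu : P → P → ℤ) (rk : P → ℕ) {k : ℕ} (C : Fin k → P) : Polynomial ℤ :=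
  ∏ i : Fin k, intervalPoin mu rk (C i) (if h : i.1 + 1 < k then C ⟨i.1 + 1, h⟩ else ⊤)

end Poset

instance {α : Type*} [Fintype α] : Fintype (WithBot α) :=
  inferInstanceAs (Fintype (Option α))

/-!
At `y = 0` every chain Poincaré polynomial of `Σ ∪ {0̂}` equals `1`, so `Ψ(Σ ∪ {0̂})` is the sum
of the weights of its chains avoiding `1̂`. These come in pairs `D`, `D ∪ {0̂}` whose weights differ
only in the first letter, `a - b` versus `b`, so each pair contributes `a · wt_D`, with `D` now a
chain of `Σ` whose ranks are shifted down by one. Since `supp` preserves ranks, the chains of `Σ`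
over a chain `C` of `L` all carry the weight of `C`, and there are `Poin_C(L;1)` of them: this is
the coefficient of `wt_C` in `Ψ_pull(L)`.
-/

open MonoidAlgebra Polynomial

def evalYHom (c : ℤ) : ABPoly →+* ABPoly :=
  mapRingHom ABWord ((Polynomial.C : ℤ →+* ℤ[X]).comp (evalRingHom c))

lemma evalYHom_single (c : ℤ) (w : ABWord) (p : ℤ[X]) :
    evalYHom c (single w p) = single w (Polynomial.C (p.eval c)) :=
  mapRingHom_single _ _ _

lemma evalY_eq_evalYHom (c : ℤ) (f : ABPoly) : evalY c f = evalYHom c f := by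
  unfold evalY
  conv_rhs => rw [← sum_coeff_single f]
  rw [map_finsuppSum]
  exact Finsupp.sum_congr fun w _ => (evalYHom_single c w _).symm

lemma evalYHom_lA (c : ℤ) : evalYHom c lA = lA := by simp [lA, evalYHom_single]

lemma evalYHom_lB (c : ℤ) : evalYHom c lB = lB := by simp [lB, evalYHom_single]

lemma scal_mul (p : ℤ[X]) (f : ABPoly) : scal p * f = p • f := by
  ext w
  simp [scal, coeff_single_one_mul]

lemma evalYHom_scal_mul (c : ℤ) (p : ℤ[X]) (f : ABPoly) :
    evalYHom c (scal p * f) = p.eval c • evalYHom c f := by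
  rw [map_mul, scal, evalYHom_single, ← scal, scal_mul, ← algebraMap_eq, algebraMap_smul]

def rankWeight (F : Finset ℕ) (lo len : ℕ) : ABPoly :=
  ((List.range' lo len).map fun i => if i ∈ F then lB else lA - lB).prod

lemma wtWord_eq_rankWeight {P : Type} [Fintype P] [PartialOrder P] [BoundedOrder P]
    (rk : P → ℕ) (C : Finset P) (lo hi : ℕ) :
    wtWord rk C lo hi = rankWeight (C.image rk) lo (hi - lo) := rfl

lemma evalYHom_rankWeight (c : ℤ) (F : Finset ℕ) (lo len : ℕ) :
    evalYHom c (rankWeight F lo len) = rankWeight F lo len := by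
  rw [rankWeight, map_list_prod, List.map_map]
  congr 2
  funext i
  simp only [Function.comp_apply, apply_ite (evalYHom c), map_sub, evalYHom_lA, evalYHom_lB]

lemma rankWeight_succ (F : Finset ℕ) (lo len : ℕ) :
    rankWeight F lo (len + 1) =
      (if lo ∈ F then lB else lA - lB) * rankWeight F (lo + 1) len := by
  rw [rankWeight, List.range'_succ, List.map_cons, List.prod_cons, rankWeight]

lemma rankWeight_congr {F G : Finset ℕ} {lo lo' len : ℕ}
    (h : ∀ i < len, lo + i ∈ F ↔ lo' + i ∈ G) : rankWeight F lo len = rankWeight G lo' len := by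
  induction len generalizing lo lo' with
  | zero => rfl
  | succ len ih =>
    have h0 : lo ∈ F ↔ lo' ∈ G := h 0 len.succ_pos
    rw [rankWeight_succ, rankWeight_succ, ih (lo' := lo' + 1) fun i hi => ?_]
    · simp only [h0]
    · convert h (i + 1) (by omega) using 2 <;> omega

lemma rankWeight_shift_add_insert_zero (F : Finset ℕ) (n : ℕ) :
    rankWeight (F.image (· + 1)) 0 (n + 1) + rankWeight (insert 0 (F.image (· + 1))) 0 (n + 1) =
      lA * rankWeight F 0 n := by
  have hshift : ∀ G : Finset ℕ, (∀ i, i + 1 ∈ G ↔ i ∈ F) → rankWeight G 1 n = rankWeight F 0 n :=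
    fun G hG => rankWeight_congr fun i _ => by rw [add_comm, hG, zero_add]
  rw [rankWeight_succ, rankWeight_succ, hshift _ (by simp), hshift _ (by simp), if_neg (by simp),
    if_pos (mem_insert_self _ _), ← add_mul, sub_add_cancel]

def topFreeChains (P : Type) [Fintype P] [PartialOrder P] [OrderTop P] : Finset (Finset P) :=
  univ.filter fun C : Finset P => IsChain (· ≤ ·) (C : Set P) ∧ (⊤ : P) ∉ C

lemma isChain_coe_preimage {P : Type} [PartialOrder P] {E : Finset (WithBot P)}
    (hE : IsChain (· ≤ ·) (E : Set (WithBot P))) :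
    IsChain (· ≤ ·) ((E.preimage (↑) WithBot.coe_injective.injOn : Finset P) : Set P) :=
  fun a ha b hb hab => by
    simpa only [WithBot.coe_le_coe] using
      hE (mem_preimage.1 ha) (mem_preimage.1 hb) (WithBot.coe_injective.ne hab)

section Chains

variable {P : Type} [Fintype P] [PartialOrder P] [OrderTop P]

lemma mem_topFreeChains {C : Finset P} :
    C ∈ topFreeChains P ↔ IsChain (· ≤ ·) (C : Set P) ∧ (⊤ : P) ∉ C := by
  simp [topFreeChains]

lemma topFreeChains_withBot_filter_preimage_eq {D : Finset P} (hD : D ∈ topFreeChains P) :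
    (topFreeChains (WithBot P)).filter
        (fun E => E.preimage (↑) WithBot.coe_injective.injOn = D) =
      {D.map Function.Embedding.coeWithBot, insert ⊥ (D.map Function.Embedding.coeWithBot)} := by
  rw [mem_topFreeChains] at hD
  have hchain : IsChain (· ≤ ·)
      ((D.map Function.Embedding.coeWithBot : Finset (WithBot P)) : Set (WithBot P)) := by
    rw [coe_map]
    exact hD.1.image_of_map_rel _ _ _ fun _ _ => WithBot.coe_le_coe.mpr
  ext E
  simp only [mem_filter, mem_topFreeChains, mem_insert, mem_singleton]
  constructor
  · rintro ⟨-, rfl⟩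
    by_cases hbot : ⊥ ∈ E
    · right; ext x; induction x using WithBot.recBotCoe <;> simp [hbot]
    · left; ext x; induction x using WithBot.recBotCoe <;> simp [hbot]
  · rintro (rfl | rfl)
    · refine ⟨⟨hchain, by simpa using hD.2⟩, ?_⟩
      ext; simp
    · refine ⟨⟨?_, by simpa using hD.2⟩, ?_⟩
      · rw [coe_insert]
        exact hchain.insert fun _ _ _ => Or.inl bot_le
      · ext; simp

lemma sum_topFreeChains_withBot {M : Type*} [AddCommMonoid M] (f : Finset (WithBot P) → M) :
    ∑ E ∈ topFreeChains (WithBot P), f E =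
      ∑ D ∈ topFreeChains P, (f (D.map Function.Embedding.coeWithBot) +
        f (insert ⊥ (D.map Function.Embedding.coeWithBot))) := by
  have hmaps : ∀ E ∈ topFreeChains (WithBot P),
      E.preimage (↑) WithBot.coe_injective.injOn ∈ topFreeChains P := by
    intro E hE
    rw [mem_topFreeChains] at hE ⊢
    exact ⟨isChain_coe_preimage hE.1, by simpa using hE.2⟩
  rw [← sum_fiberwise_of_maps_to hmaps]
  refine sum_congr rfl fun D hD => ?_
  rw [topFreeChains_withBot_filter_preimage_eq hD, sum_pair (insert_ne_self.2 (by simp)).symm]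

lemma sum_topFreeChains_comp_image {L M : Type} [Fintype L] [PartialOrder L] [OrderTop L]
    [AddCommMonoid M] {f : P → L} (hf : Monotone f) (htop : ∀ s, f s = ⊤ ↔ s = ⊤)
    (g : Finset L → M) :
    ∑ D ∈ topFreeChains P, g (D.image f) =
      ∑ C ∈ topFreeChains L,
        (univ.filter fun D : Finset P => IsChain (· ≤ ·) (D : Set P) ∧ D.image f = C).card •
          g C := by
  have hmaps : ∀ D ∈ topFreeChains P, D.image f ∈ topFreeChains L := by
    intro D hD
    rw [mem_topFreeChains] at hD ⊢
    refine ⟨?_, by simpa [htop] using hD.2⟩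
    rw [coe_image]
    exact hD.1.image_of_map_rel _ _ _ fun _ _ h => hf h
  rw [← sum_fiberwise_of_maps_to hmaps]
  refine sum_congr rfl fun C hC => ?_
  rw [sum_congr rfl fun D hD => congrArg g (mem_filter.1 hD).2, sum_const]
  congr 2
  ext D
  simp only [mem_filter, mem_topFreeChains, mem_univ, true_and]
  constructor
  · rintro ⟨⟨hD, -⟩, rfl⟩
    exact ⟨hD, rfl⟩
  · rintro ⟨hD, rfl⟩
    exact ⟨⟨hD, fun h => (mem_topFreeChains.1 hC).2 (by simpa [htop] using h)⟩, rfl⟩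

end Chains

section Graded

variable {P : Type} [Fintype P] [PartialOrder P] {rk : P → ℕ} {mu : P → P → ℤ}

lemma intervalPoin_eval_zero (hrk : StrictMono rk) (hmu : ∀ x, mu x x = 1) {x y : P}
    (hxy : x ≤ y) : (intervalPoin mu rk x y).eval 0 = 1 := by
  rw [intervalPoin, eval_finsetSum, sum_eq_single_of_mem x (by simp [hxy])]
  · simp [hmu x]
  · intro z hz hzx
    have hlt : rk x < rk z := hrk (lt_of_le_of_ne (mem_filter.1 hz).2.1 (Ne.symm hzx))
    simp [zero_pow (Nat.sub_ne_zero_of_lt hlt)]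

variable [BoundedOrder P] {n : ℕ}

lemma GradedRank.strictMono (h : GradedRank rk n) : StrictMono rk := by
  let _ := Fintype.toLocallyFiniteOrder (α := P)
  exact (strictMono_iff_forall_covBy rk).2 fun x y hxy => by rw [h.2.2 x y hxy]; omega

lemma GradedRank.rk_eq_iff (h : GradedRank rk n) {x : P} : rk x = n ↔ x = ⊤ := by
  refine ⟨fun hx => ?_, fun hx => hx ▸ h.2.1⟩
  by_contra hne
  have := h.strictMono (lt_top_iff_ne_top.mpr hne)
  rw [h.2.1] at this
  omega

lemma le_chainNext (C : Finset P) (x : P) : x ≤ chainNext C x := by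
  rw [chainNext]
  split
  · next h => exact h.choose_spec.2.1.le
  · exact le_top

lemma chainPoin_eval_zero (hrk : StrictMono rk) (hmu : ∀ x, mu x x = 1) (C : Finset P) :
    (chainPoin mu rk C).eval 0 = 1 := by
  rw [chainPoin, eval_prod]
  exact prod_eq_one fun x _ => intervalPoin_eval_zero hrk hmu (le_chainNext C x)

lemma evalY_exPsi (c : ℤ) (mu : P → P → ℤ) (rk : P → ℕ) (n : ℕ) :
    evalY c (exPsi mu rk n) =
      ∑ C ∈ topFreeChains P, (chainPoin mu rk C).eval c • rankWeight (C.image rk) 0 n := by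
  rw [evalY_eq_evalYHom, exPsi, map_sum]
  refine sum_congr rfl fun C _ => ?_
  rw [wtWord_eq_rankWeight, Nat.sub_zero, evalYHom_scal_mul, evalYHom_rankWeight]

end Graded

def bottomExtRank {P : Type} (rk : P → ℕ) : WithBot P → ℕ :=
  WithBot.recBotCoe 0 fun s => rk s + 1

lemma image_map_coeWithBot_bottomExtRank {P : Type} (rk : P → ℕ) (D : Finset P) :
    (D.map Function.Embedding.coeWithBot).image (bottomExtRank rk) =
      (D.image rk).image (· + 1) := by
  rw [map_eq_image, image_image, image_image]
  rfl

lemma evalY_zero_exPsi_withBot {P : Type} [Fintype P] [PartialOrder P] [OrderTop P]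
    {rk : P → ℕ} {mu : WithBot P → WithBot P → ℤ} (hrk : StrictMono (bottomExtRank rk))
    (hmu : ∀ x, mu x x = 1) (n : ℕ) :
    evalY 0 (exPsi mu (bottomExtRank rk) (n + 1)) =
      lA * ∑ D ∈ topFreeChains P, rankWeight (D.image rk) 0 n := by
  rw [evalY_exPsi, sum_topFreeChains_withBot, mul_sum]
  refine sum_congr rfl fun D _ => ?_
  simp only [chainPoin_eval_zero hrk hmu, one_smul]
  rw [image_insert, image_map_coeWithBot_bottomExtRank]
  exact rankWeight_shift_add_insert_zero _ _

theorem statement10_general {L S : Type} [Fintype L] [PartialOrder L] [BoundedOrder L]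
    [Fintype S] [PartialOrder S] [OrderTop S]
    (n : ℕ) (rkL : L → ℕ) (muL : L → L → ℤ) (rkS : S → ℕ)
    (muS : WithBot S → WithBot S → ℤ) (supp : S → L)
    (hgradeL : GradedRank rkL n)
    (hgradeS : GradedRank
      (fun x : WithBot S => WithBot.recBotCoe 0 (fun s => rkS s + 1) x) (n + 1))
    (hmuS : IsMoebius muS)
    (hmono : Monotone supp) (hrank : ∀ s, rkL (supp s) = rkS s)
    (hfiber : ∀ C : Finset L, IsChain (· ≤ ·) (C : Set L) →
      ((univ.filter fun D : Finset S =>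
          IsChain (· ≤ ·) (D : Set S) ∧ D.image supp = C).card : ℤ) =
        (chainPoin muL rkL C).eval 1) :
    evalY 0 (exPsi muS (fun x : WithBot S => WithBot.recBotCoe 0 (fun s => rkS s + 1) x)
        (n + 1)) =
      lA * evalY 1 (exPsi muL rkL n) := by
  have hsupp_top : ∀ s, supp s = ⊤ ↔ s = ⊤ := fun s => by
    rw [← hgradeL.rk_eq_iff, hrank, ← WithBot.coe_eq_top, ← hgradeS.rk_eq_iff]
    exact Nat.add_right_cancel_iff.symm
  have hrank_image : ∀ D : Finset S, D.image rkS = (D.image supp).image rkL := fun D => by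
    rw [image_image]
    exact image_congr fun s _ => (hrank s).symm
  refine (evalY_zero_exPsi_withBot (rk := rkS) hgradeS.strictMono hmuS.1 n).trans ?_
  rw [evalY_exPsi]
  simp only [hrank_image]
  rw [sum_topFreeChains_comp_image hmono hsupp_top fun C => rankWeight (C.image rkL) 0 n]
  refine congrArg _ (sum_congr rfl fun C hC => ?_)
  rw [← natCast_zsmul, hfiber C (mem_topFreeChains.1 hC).1]

theorem statement10 {L S : Type} [Fintype L] [PartialOrder L] [BoundedOrder L]
    [Fintype S] [PartialOrder S] [OrderTop S]
    (n : ℕ) (rkL : L → ℕ) (muL : L → L → ℤ) (rkS : S → ℕ)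
    (muS : WithBot S → WithBot S → ℤ) (supp : S → L)
    (hgradeL : GradedRank rkL n)
    (hgradeS : GradedRank
      (fun x : WithBot S => WithBot.recBotCoe 0 (fun s => rkS s + 1) x) (n + 1))
    (hmuL : IsMoebius muL) (hmuS : IsMoebius muS)
    (hmono : Monotone supp) (hrank : ∀ s, rkL (supp s) = rkS s)
    (hsurj : Function.Surjective supp)
    (hfiber : ∀ C : Finset L, IsChain (· ≤ ·) (C : Set L) →
      ((univ.filter fun D : Finset S =>
          IsChain (· ≤ ·) (D : Set S) ∧ D.image supp = C).card : ℤ) =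
        (chainPoin muL rkL C).eval 1) :
    evalY 0 (exPsi muS (fun x : WithBot S => WithBot.recBotCoe 0 (fun s => rkS s + 1) x)
        (n + 1)) =
      lA * evalY 1 (exPsi muL rkL n) :=
  statement10_general n rkL muL rkS muS supp hgradeL hgradeS hmuS hmono hrank hfiber
end
end

section
/- Let P be an R-labeled poset of rank n and let M be a maximal chain in P with u(M) = a·b^j for some j ≥ 0 (so n = j+1). Then ω(u(M)) = Σ_{E ⊆ {1,…,j+1}} y^{#E}·u(M,E); explicitly, for j ≥ 1 this says (ab + y·ba + y·ab + y²·ba)(b + y·a)^{j−1} = Σ_{E ⊆ {1,…,j+1}} y^{#E}·u(M,E), and for j = 0 it says a + y·b = Σ_{E ⊆ {1}} y^{#E}·u(M,E). -/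
open Finset
open scoped Classical

noncomputable section

/-! Identify `E ⊆ {1,…,j+1}` with its indicator `g`. When `u(M) = ab^j`, the first letter of
`u(M,E)` is `b` iff `1 ∈ E`, and letter `i + 1` is `a` iff `i ∈ E`; so the choice at each
position affects only adjacent letters and the weighted sum over `E` factors as
`(ab + y·ba) (b + y·a)^(j-1) (1 + y)`, the last factor coming from position `j + 1`, which
changes no letter. As `y` is central, `(ab + y·ba)(1 + y) = ω(ab)`, and
`ω(ab^j) = ω(ab) (b + y·a)^(j-1)`. -/

open MonoidAlgebra FreeMonoid Polynomial

lemma scal_mul_comm (p : ℤ[X]) (f : ABPoly) : scal p * f = f * scal p :=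
  single_one_comm p f

lemma lY_mul_comm (f : ABPoly) : lY * f = f * lY := scal_mul_comm X f

lemma omegaSub_abMono {n : ℕ} (v : Fin n → Bool) :
    omegaSub (abMono v) = omegaWord (List.ofFn v) := by
  rw [omegaSub, abMono, MonoidAlgebra.coeff_single, Finsupp.sum_single_index (by simp [scal]),
    wordOf, toList_ofList, scal, ← one_def, one_mul]

lemma omegaWord_replicate_true (m : ℕ) :
    omegaWord (List.replicate m true) = (lB + lY * lA) ^ m := by
  induction m with
  | zero => rfl
  | succ m ih => rw [List.replicate_succ, omegaWord, ih, pow_succ']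

lemma sum_fun_fin_succ {α R : Type*} [Fintype α] [AddCommMonoid R] {n : ℕ}
    (F : (Fin (n + 1) → α) → R) :
    ∑ g, F g = ∑ t, ∑ g : Fin n → α, F (Fin.cons t g) := by
  rw [← (Fin.consEquiv fun _ => α).sum_comp, Fintype.sum_prod_type]
  rfl

lemma sum_finset_eq_sum_fun_bool {α R : Type*} [Fintype α] [DecidableEq α] [AddCommMonoid R]
    (F : (α → Bool) → R) :
    ∑ E : Finset α, F (fun a => decide (a ∈ E)) = ∑ g, F g := by
  refine Fintype.sum_bijective (fun E a => decide (a ∈ E)) ⟨fun E E' h => ?_, fun g => ?_⟩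
    _ _ fun _ => rfl
  · ext a
    simpa using congrFun h a
  · exact ⟨univ.filter fun a => g a, by ext a; simp⟩

lemma prod_pow_toNat_decide_mem {α : Type*} [Fintype α] [DecidableEq α] (E : Finset α) :
    ∏ a, X ^ (decide (a ∈ E)).toNat = (X ^ E.card : ℤ[X]) := by
  rw [prod_pow_eq_pow_sum]
  simp only [Bool.toNat, Bool.cond_decide, sum_boole]
  simp

lemma sum_single_one_pow_toNat : ∑ t : Bool, single (1 : ABWord) (X ^ t.toNat) = 1 + lY := by
  simp [lY, one_def, add_comm]

lemma sum_single_of_pow_toNat : ∑ t : Bool, single (of t) (X ^ t.toNat) = lA + lY * lB := by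
  simp [lA, lB, lY, single_mul_single, add_comm]

lemma sum_single_of_not_pow_toNat :
    ∑ t : Bool, single (of !t) (X ^ t.toNat) = lB + lY * lA := by
  simp [lA, lB, lY, single_mul_single, add_comm]

lemma sum_single_of_mul_of_not_pow_toNat :
    ∑ t : Bool, single (of t * of !t) (X ^ t.toNat) = lA * lB + lY * (lB * lA) := by
  simp [lA, lB, lY, single_mul_single, add_comm]

/-- `abFlip g` is `u(M,E)` for `u(M) = ab^j` and `E = {i | g i}` (positions counted from `0`). -/
def abFlip {j : ℕ} (g : Fin (j + 1) → Bool) : Fin (j + 1) → Bool :=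
  Fin.cons (g 0) fun k => !g k.castSucc

lemma sum_single_not_castSucc (m : ℕ) :
    ∑ g : Fin (m + 1) → Bool,
        single (ofList (List.ofFn fun k : Fin m => !g k.castSucc)) (∏ i, X ^ (g i).toNat) =
      (lB + lY * lA) ^ m * (1 + lY) := by
  induction m with
  | zero =>
    rw [sum_fun_fin_succ, ← sum_single_one_pow_toNat]
    simp
  | succ m ih =>
    rw [sum_fun_fin_succ, pow_succ', mul_assoc, ← ih, ← sum_single_of_not_pow_toNat, sum_mul]
    refine sum_congr rfl fun t _ => ?_
    rw [mul_sum]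
    refine sum_congr rfl fun g _ => ?_
    rw [single_mul_single, Fin.prod_univ_succ, List.ofFn_succ]
    simp

lemma sum_single_abFlip_zero :
    ∑ g : Fin 1 → Bool, single (wordOf (abFlip g)) (∏ i, X ^ (g i).toNat) = lA + lY * lB := by
  rw [sum_fun_fin_succ, ← sum_single_of_pow_toNat]
  simp [abFlip, wordOf]

lemma sum_single_abFlip_succ (m : ℕ) :
    ∑ g : Fin (m + 2) → Bool, single (wordOf (abFlip g)) (∏ i, X ^ (g i).toNat) =
      (lA * lB + lY * (lB * lA) + lY * (lA * lB) + lY * lY * (lB * lA)) *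
        (lB + lY * lA) ^ m := by
  have hcentral : (lB + lY * lA) ^ m * (1 + lY) = (1 + lY) * (lB + lY * lA) ^ m := by
    rw [show (1 : ABPoly) + lY = scal (1 + X) by simp [scal, lY, one_def], scal_mul_comm]
  have hfactor : lA * lB + lY * (lB * lA) + lY * (lA * lB) + lY * lY * (lB * lA) =
      (lA * lB + lY * (lB * lA)) * (1 + lY) := by
    rw [mul_add, mul_one, add_mul, ← lY_mul_comm (lA * lB), mul_assoc lY (lB * lA),
      ← lY_mul_comm (lB * lA), mul_assoc]
    abel
  rw [hfactor, mul_assoc, ← hcentral, ← sum_single_not_castSucc,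
    ← sum_single_of_mul_of_not_pow_toNat, sum_fun_fin_succ, sum_mul]
  refine sum_congr rfl fun t _ => ?_
  rw [mul_sum]
  refine sum_congr rfl fun g _ => ?_
  rw [single_mul_single, Fin.prod_univ_succ, wordOf, abFlip, List.ofFn_succ, List.ofFn_succ]
  simp [mul_assoc]

section MaximalChain

variable {P : Type} {lam : P → P → ℕ} {j : ℕ} {M : Fin (j + 2) → P}

lemma uStat_eq_cons_of_ofFn_eq (hu : List.ofFn (uStat lam M) = false :: List.replicate j true) :
    uStat lam M = Fin.cons false fun _ => true := by
  rw [← List.ofFn_inj, hu, List.ofFn_cons, List.ofFn_const]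

lemma uStatE_eq_abFlip (hu : uStat lam M = Fin.cons false fun _ => true)
    (E : Finset (Fin (j + 1))) : uStatE lam M E = abFlip fun i => decide (i ∈ E) := by
  funext i
  refine Fin.cases ?_ (fun k => ?_) i
  · simp [uStatE, abFlip, hu]
  · have hprev : (⟨k.succ.1 - 1, by omega⟩ : Fin (j + 1)) = k.castSucc := Fin.ext (by simp)
    rw [uStatE, hu, Fin.cons_succ, if_pos rfl, dif_pos (show 0 < (k.succ : ℕ) from k.succ_pos), hprev]
    simp [abFlip]

lemma sum_scal_mul_abMono_uStatE (hu : uStat lam M = Fin.cons false fun _ => true) :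
    ∑ E : Finset (Fin (j + 1)), scal (X ^ E.card) * abMono (uStatE lam M E) =
      ∑ g : Fin (j + 1) → Bool, single (wordOf (abFlip g)) (∏ i, X ^ (g i).toNat) := by
  rw [← sum_finset_eq_sum_fun_bool]
  refine sum_congr rfl fun E _ => ?_
  rw [uStatE_eq_abFlip hu, scal, abMono, single_mul_single, one_mul, mul_one,
    prod_pow_toNat_decide_mem]

end MaximalChain

theorem statement19_general {P : Type}
    (n : ℕ) (lam : P → P → ℕ)
    (M : Fin (n + 1) → P)
    (j : ℕ) (hn : n = j + 1)
    (hu : List.ofFn (uStat lam M) = false :: List.replicate j true) :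
    (omegaSub (abMono (uStat lam M)) =
      ∑ E : Finset (Fin n), scal (Polynomial.X ^ E.card) * abMono (uStatE lam M E)) ∧
    (j = 0 →
      lA + lY * lB =
        ∑ E : Finset (Fin n), scal (Polynomial.X ^ E.card) * abMono (uStatE lam M E)) ∧
    (1 ≤ j →
      (lA * lB + lY * (lB * lA) + lY * (lA * lB) + lY * lY * (lB * lA)) *
          (lB + lY * lA) ^ (j - 1) =
        ∑ E : Finset (Fin n), scal (Polynomial.X ^ E.card) * abMono (uStatE lam M E)) := by
  subst hn
  rw [sum_scal_mul_abMono_uStatE (uStat_eq_cons_of_ofFn_eq hu), omegaSub_abMono, hu]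
  rcases j with _ | m
  · rw [sum_single_abFlip_zero]
    exact ⟨mul_one _, fun _ => rfl, fun h => by omega⟩
  · rw [sum_single_abFlip_succ, List.replicate_succ, omegaWord, omegaWord_replicate_true]
    exact ⟨rfl, fun h => by omega, fun _ => rfl⟩

theorem statement19 {P : Type} [Fintype P] [PartialOrder P] [BoundedOrder P]
    (n : ℕ) (rk : P → ℕ) (lam : P → P → ℕ)
    (hgrade : GradedRank rk n) (hlam : IsRLabeling lam)
    (M : Fin (n + 1) → P) (hM : M ∈ maxChains (P := P) n)
    (j : ℕ) (hn : n = j + 1)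
    (hu : List.ofFn (uStat lam M) = false :: List.replicate j true) :
    (omegaSub (abMono (uStat lam M)) =
      ∑ E : Finset (Fin n), scal (Polynomial.X ^ E.card) * abMono (uStatE lam M E)) ∧
    (j = 0 →
      lA + lY * lB =
        ∑ E : Finset (Fin n), scal (Polynomial.X ^ E.card) * abMono (uStatE lam M E)) ∧
    (1 ≤ j →
      (lA * lB + lY * (lB * lA) + lY * (lA * lB) + lY * lY * (lB * lA)) *
          (lB + lY * lA) ^ (j - 1) =
        ∑ E : Finset (Fin n), scal (Polynomial.X ^ E.card) * abMono (uStatE lam M E)) :=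
  statement19_general n lam M j hn hu
end
end
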